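/- For every Young diagram D of size n, the intertwining number ⟨Ind_{S_{Dᵗ}}^{S_n}(sgn), Ind_{S_D}^{S_n}(1)⟩ equals 1, where Dᵗ is the transpose partition. -/

import Mathlib

/-!
Frobenius reciprocity identifies `Hom(Ind_H sgn, ℂ[G/K])`, for `G = S_n`, `H = S_{Dᵗ}` and
`K = S_D`, with the vectors of `ℂ[G/K]` on which `H` acts through `sgn`. Such a vector vanishes on
every coset fixed by an odd element of `H` and is determined on an `H`-orbit by its value at one
point, so the space is a line once a single orbit, with stabilisers in `ker sgn`, remains.

Label `i ∈ Fin n` by the pair (row of `i` in `Dᵗ`, row of `g⁻¹ i` in `D`). If two labels coincide,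
the transposition of the two points is an odd element of `H` fixing `gK`. Otherwise the labels
form a 0-1 matrix whose row sums are the rows of `Dᵗ` and whose column sums are the rows of `D`,
which forces it to be the diagram `Dᵗ` itself; hence all such cosets form one `H`-orbit, on which
`H` acts freely.
-/

noncomputable section

open CategoryTheory Equiv

namespace PieriGL

/-- Partial sums of the row lengths of a Young diagram (parts padded with zeros). -/
def psum (D : YoungDiagram) (s : ℕ) : ℕ := ∑ j ∈ Finset.range s, D.rowLen j

/-- The dominance order on Young diagrams: `domLE D E` means `D ⪯ E`, i.e. for all `i`,
`d_1 + ... + d_i ≤ e_1 + ... + e_i`. -/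
def domLE (D E : YoungDiagram) : Prop := ∀ i, psum D i ≤ psum E i

/-- `E - D` is a horizontal strip: `D ⊆ E` and each column of `E` is at most one box longer
than the corresponding column of `D`. -/
def IsHorizontalStrip (D E : YoungDiagram) : Prop :=
  D ≤ E ∧ ∀ j, E.colLen j ≤ D.colLen j + 1

/-- The index of the block (row of the Young diagram) in which `i` lies, for the partition of
`{0, 1, 2, ...}` into consecutive blocks of sizes the rows of `D`. -/
def blk (D : YoungDiagram) (i : ℕ) : ℕ :=
  ((Finset.range (i + 1)).filter fun s => psum D (s + 1) ≤ i).card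

/-- The Young subgroup `S_D ≅ S_{d_1} × ... × S_{d_r} ⊆ S_n` attached to a Young diagram `D`:
the permutations preserving each consecutive block of sizes `d_1, ..., d_r`. -/
def youngSubgroup (n : ℕ) (D : YoungDiagram) : Subgroup (Equiv.Perm (Fin n)) where
  carrier := {σ | ∀ i : Fin n, blk D (σ i) = blk D i}
  one_mem' := by intro i; rfl
  mul_mem' := by
    intro a b ha hb i
    have := ha (b i)
    simp only [Equiv.Perm.mul_apply]
    rw [this, hb i]
  inv_mem' := by
    intro a ha i
    have := ha (a⁻¹ i)
    simpa using this.symm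

/-- The Young module `Y_D = Ind_{S_D}^{S_n}(1)`: the complex permutation representation of
`S_n` on the cosets `S_n / S_D`. -/
def youngModule (n : ℕ) (D : YoungDiagram) : Rep ℂ (Equiv.Perm (Fin n)) :=
  Rep.ofMulAction ℂ (Equiv.Perm (Fin n)) (Equiv.Perm (Fin n) ⧸ youngSubgroup n D)

/-- The intertwining number `⟨π, τ⟩ = dim Hom_G(π, τ)`. -/
def interNum {G : Type} [Monoid G] (π τ : Rep ℂ G) : ℕ :=
  Module.finrank ℂ (π ⟶ τ)

section Induced

variable {G : Type} [Group G] (H : Subgroup G) {W : Type} [AddCommGroup W] [Module ℂ W]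

/-- The space of the induced representation `Ind_H^G(ρ)`: functions `f : G → W` with
`f(hg) = ρ(h) f(g)`. -/
def indSpace (ρ : Representation ℂ H W) : Submodule ℂ (G → W) where
  carrier := {f | ∀ (h : H) (g : G), f (↑h * g) = ρ h (f g)}
  add_mem' := by intro a b ha hb h g; simp [ha h g, hb h g]
  zero_mem' := by intro h g; simp
  smul_mem' := by intro c a ha h g; simp [ha h g]

/-- The induced representation `Ind_H^G(ρ)`, with `G` acting by right translation on
equivariant functions `G → W`. -/
def indRep (ρ : Representation ℂ H W) : Rep ℂ G :=
  Rep.of (X := indSpace H ρ)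
    { toFun := fun g =>
        { toFun := fun f => ⟨fun x => f.1 (x * g), fun h x => by
            have := f.2 h (x * g); simpa [mul_assoc] using this⟩
          map_add' := by intro a b; apply Subtype.ext; funext x; rfl
          map_smul' := by intro c a; apply Subtype.ext; funext x; rfl }
      map_one' := by
        apply LinearMap.ext; intro f; apply Subtype.ext; funext x; simp
      map_mul' := by
        intro g₁ g₂
        apply LinearMap.ext; intro f; apply Subtype.ext; funext x
        simp [mul_assoc] }

end Induced

/-- The sign character of a subgroup of `S_n`, as a one-dimensional representation on `ℂ`. -/
def sgnRep {n : ℕ} (H : Subgroup (Equiv.Perm (Fin n))) : Representation ℂ H ℂ where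
  toFun h := algebraMap ℂ (ℂ →ₗ[ℂ] ℂ) ((Equiv.Perm.sign (h : Equiv.Perm (Fin n)) : ℤ) : ℂ)
  map_one' := by simp
  map_mul' := by
    intro a b
    show algebraMap ℂ (ℂ →ₗ[ℂ] ℂ) _ = algebraMap ℂ (ℂ →ₗ[ℂ] ℂ) _ * algebraMap ℂ (ℂ →ₗ[ℂ] ℂ) _
    rw [← map_mul]
    norm_cast
    rw [Subgroup.coe_mul, map_mul]

/-- `Ind_{S_E}^{S_n}(sgn)`, the representation of `S_n` induced from the sign character of the
Young subgroup `S_E`. -/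
def sgnInduced (n : ℕ) (E : YoungDiagram) : Rep ℂ (Equiv.Perm (Fin n)) :=
  indRep (youngSubgroup n E) (sgnRep (youngSubgroup n E))



open CategoryTheory Matrix
open scoped TensorProduct

section SemiInvariants

variable {k G : Type} [CommRing k] [Monoid G]

def semiInvariants (A : Rep k G) (χ : G → k) : Submodule k A where
  carrier := {v | ∀ g, A.ρ g v = χ g • v}
  add_mem' ha hb g := by simp [ha g, hb g]
  zero_mem' g := by simp
  smul_mem' c v hv g := by simp [hv g, smul_comm c]

lemma apply_eq_mul_apply_one (ρ : Representation k G k) (g : G) (x : k) :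
    ρ g x = x * ρ g 1 := by
  rw [← smul_eq_mul x, ← map_smul, smul_eq_mul, mul_one]

def oneDimChar (ρ : Representation k G k) : G →* k where
  toFun g := ρ g 1
  map_one' := by simp
  map_mul' a b := by
    rw [map_mul, Module.End.mul_apply, apply_eq_mul_apply_one ρ a, mul_comm]

def homEquivSemiInvariants (ρ : Representation k G k) (A : Rep k G) :
    (Rep.of ρ ⟶ A) ≃ₗ[k] semiInvariants A (oneDimChar ρ) where
  toFun f := ⟨f.hom 1, fun g => by
    rw [← Rep.hom_comm_apply, ← map_smul, smul_eq_mul, mul_one]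
    rfl⟩
  map_add' _ _ := rfl
  map_smul' _ _ := rfl
  invFun v := Rep.ofHom ⟨LinearMap.toSpanSingleton k A v, fun g => by
    ext
    simp only [LinearMap.comp_apply, LinearMap.toSpanSingleton_apply, one_smul]
    exact (v.2 g).symm⟩
  left_inv f := by ext; simp
  right_inv v := by ext; simp

end SemiInvariants

lemma oneDimChar_sgnRep {n : ℕ} (H : Subgroup (Perm (Fin n))) (h : H) :
    oneDimChar (sgnRep H) h = (Perm.sign (h : Perm (Fin n)) : ℤ) := by
  simp [oneDimChar, sgnRep]

open Classical in
/-- `indRep` is definitionally Mathlib's coinduced representation, which for a subgroup of finite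
index is isomorphic to the induced one; Frobenius reciprocity does the rest. -/
def indRepHomEquiv {G : Type} [Group G] (H : Subgroup G) [H.FiniteIndex]
    (ρ : Representation ℂ H ℂ) (M : Rep ℂ G) :
    (indRep H ρ ⟶ M) ≃ₗ[ℂ] (Rep.of ρ ⟶ Rep.res H.subtype M) :=
  (Linear.homCongr ℂ ((Iso.refl _ : indRep H ρ ≅ Rep.coind H.subtype (Rep.of ρ)).trans
    (Rep.indCoindIso (Rep.of ρ)).symm) (Iso.refl M)).trans
    (Rep.indResHomEquiv H.subtype (Rep.of ρ) M)

section PermutationModule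

open MonoidAlgebra

variable {k H X : Type} [Field k] [Group H] [MulAction H X] {χ : H →* k}

lemma coeff_smul_of_mem_semiInvariants {v : MonoidAlgebra k X}
    (hv : v ∈ semiInvariants (Rep.ofMulAction k H X) χ) (h : H) (x : X) :
    v.coeff (h • x) = χ h⁻¹ * v.coeff x := by
  simpa using congrArg (fun w : MonoidAlgebra k X => w.coeff x) (hv h⁻¹)

lemma eq_zero_of_mem_semiInvariants {v : MonoidAlgebra k X} {x₀ : X}
    (hv : v ∈ semiInvariants (Rep.ofMulAction k H X) χ) (hv₀ : v.coeff x₀ = 0)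
    (hfix : ∀ x ∉ MulAction.orbit H x₀, ∃ h : H, h • x = x ∧ χ h ≠ 1) : v = 0 := by
  refine coeff_injective (Finsupp.ext fun x => ?_)
  by_cases hx : x ∈ MulAction.orbit H x₀
  · obtain ⟨h, rfl⟩ := hx
    simp [coeff_smul_of_mem_semiInvariants hv, hv₀]
  · obtain ⟨h, hhx, hχ⟩ := hfix x hx
    have hvx := coeff_smul_of_mem_semiInvariants hv h⁻¹ x
    rw [inv_inv, inv_smul_eq_iff.2 hhx.symm] at hvx
    have : (χ h - 1) * v.coeff x = 0 := by linear_combination -hvx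
    simpa [sub_eq_zero, hχ] using this

def twistedOrbitSum [Fintype H] (χ : H →* k) (x₀ : X) : MonoidAlgebra k X :=
  ∑ h : H, χ h⁻¹ • single (h • x₀) 1

lemma twistedOrbitSum_mem_semiInvariants [Fintype H] (x₀ : X) :
    twistedOrbitSum χ x₀ ∈ semiInvariants (Rep.ofMulAction k H X) χ := by
  intro g
  simp only [twistedOrbitSum, map_sum, map_smul, Representation.ofMulAction_single, smul_smul,
    Finset.smul_sum]
  refine Fintype.sum_equiv (Equiv.mulLeft g) _ _ fun h => ?_
  dsimp only [Equiv.coe_mulLeft]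
  rw [_root_.mul_inv_rev, map_mul, mul_left_comm, ← map_mul, mul_inv_cancel, map_one, mul_one]

lemma coeff_twistedOrbitSum_ne_zero [CharZero k] [Fintype H] (x₀ : X)
    (hstab : ∀ h : H, h • x₀ = x₀ → χ h = 1) : (twistedOrbitSum χ x₀).coeff x₀ ≠ 0 := by
  classical
  simp only [twistedOrbitSum, coeff_sum, coeff_smul, coeff_single, Finsupp.coe_finsetSum,
    Finset.sum_apply, Finsupp.smul_apply, Finsupp.single_apply, smul_eq_mul, mul_ite, mul_one,
    mul_zero]
  rw [Finset.sum_ite, Finset.sum_const_zero, add_zero,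
    Finset.sum_congr rfl fun h hh => hstab h⁻¹ (inv_smul_eq_iff.2 (Finset.mem_filter.1 hh).2.symm),
    Finset.sum_const, nsmul_eq_mul, mul_one]
  exact_mod_cast (Finset.card_pos.2 ⟨1, by simp⟩).ne'

theorem finrank_semiInvariants_ofMulAction_eq_one [CharZero k] [Finite H] (x₀ : X)
    (hstab : ∀ h : H, h • x₀ = x₀ → χ h = 1)
    (hfix : ∀ x ∉ MulAction.orbit H x₀, ∃ h : H, h • x = x ∧ χ h ≠ 1) :
    Module.finrank k (semiInvariants (Rep.ofMulAction k H X) χ) = 1 := by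
  have := Fintype.ofFinite H
  let ev : semiInvariants (Rep.ofMulAction k H X) χ →ₗ[k] k :=
    Finsupp.lapply x₀ ∘ₗ (coeffLinearEquiv k).toLinearMap ∘ₗ Submodule.subtype _
  let w : semiInvariants (Rep.ofMulAction k H X) χ :=
    ⟨_, twistedOrbitSum_mem_semiInvariants x₀⟩
  have hw : ev w ≠ 0 := coeff_twistedOrbitSum_ne_zero x₀ hstab
  have hbij : Function.Bijective ev := by
    refine ⟨fun u v huv => ?_, fun z => ⟨(z / ev w) • w, by simp [hw]⟩⟩
    rw [← sub_eq_zero, ← Subtype.coe_inj, Submodule.coe_sub, Submodule.coe_zero]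
    exact eq_zero_of_mem_semiInvariants (Submodule.sub_mem _ u.2 v.2)
      (by simpa [sub_eq_zero, ev] using huv) hfix
  rw [LinearEquiv.finrank_eq (LinearEquiv.ofBijective ev hbij), Module.finrank_self]

end PermutationModule

open Finset in
lemma card_filter_comp_perm {α : Type*} [Fintype α] (e : Perm α) (p : α → Prop)
    [DecidablePred p] : #{a | p (e a)} = #{a | p a} :=
  card_equiv e fun a => by simp

lemma card_transpose (D : YoungDiagram) : D.transpose.card = D.card :=
  Finset.card_map _

def transposeCellsEquiv (D : YoungDiagram) : D.transpose.cells ≃ D.cells :=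
  (Equiv.prodComm ℕ ℕ).subtypeEquiv fun c => by simp

lemma fst_lt_colLen_zero {E : YoungDiagram} {c : ℕ × ℕ} (hc : c ∈ E) : c.1 < E.colLen 0 :=
  YoungDiagram.mem_iff_lt_colLen.1 (E.up_left_mem le_rfl (Nat.zero_le c.2) hc)

section Blocks

open Finset

variable (D : YoungDiagram)

lemma psum_succ (s : ℕ) : psum D (s + 1) = psum D s + D.rowLen s :=
  sum_range_succ _ _

lemma psum_mono : Monotone (psum D) := fun _ _ hab =>
  sum_le_sum_of_subset (range_subset_range.2 hab)

lemma psum_eq_card_filter (m : ℕ) : psum D m = #{c ∈ D.cells | c.1 < m} := by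
  rw [card_eq_sum_card_fiberwise (f := Prod.fst) (t := range m) fun c hc =>
    mem_range.2 (mem_filter.1 hc).2]
  refine sum_congr rfl fun i hi => ?_
  rw [filter_filter, YoungDiagram.rowLen_eq_card, YoungDiagram.row]
  exact congrArg card (filter_congr fun c _ => ⟨fun h => ⟨h ▸ mem_range.1 hi, h⟩, And.right⟩)

lemma psum_le_card (m : ℕ) : psum D m ≤ D.card := by
  rw [psum_eq_card_filter]
  exact card_le_card (filter_subset _ _)

lemma psum_colLen_zero : psum D (D.colLen 0) = D.card := by
  rw [psum_eq_card_filter, filter_true_of_mem fun c hc => fst_lt_colLen_zero hc]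

lemma blk_eq_of_psum_le_of_lt {b i : ℕ} (h₁ : psum D b ≤ i) (h₂ : i < psum D (b + 1)) :
    blk D i = b := by
  have hrow : 0 < D.rowLen b := by rw [psum_succ] at h₂; omega
  have hb : b ≤ psum D b :=
    calc b = ∑ _j ∈ range b, 1 := by simp
      _ ≤ psum D b := sum_le_sum fun j hj =>
        hrow.trans_le (D.rowLen_anti j b (mem_range.1 hj).le)
  rw [blk, ← card_range b]
  congr 1
  ext s
  simp only [mem_filter, mem_range]
  constructor
  · rintro ⟨-, hs⟩
    by_contra! hbs
    have := psum_mono D (show b + 1 ≤ s + 1 by omega)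
    omega
  · intro hs
    have := psum_mono D (show s + 1 ≤ b by omega)
    omega

lemma exists_psum_le_of_lt_psum {i m : ℕ} (hi : i < psum D m) :
    ∃ b, psum D b ≤ i ∧ i < psum D (b + 1) := by
  induction m with
  | zero => simp [psum] at hi
  | succ m ih => exact if hm : psum D m ≤ i then ⟨m, hm, hi⟩ else ih (by omega)

lemma psum_blk_le_and_lt {i : ℕ} (hi : i < D.card) :
    psum D (blk D i) ≤ i ∧ i < psum D (blk D i + 1) := by
  obtain ⟨b, h₁, h₂⟩ := exists_psum_le_of_lt_psum D ((psum_colLen_zero D).symm ▸ hi)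
  rw [blk_eq_of_psum_le_of_lt D h₁ h₂]
  exact ⟨h₁, h₂⟩

variable {D} {n : ℕ}

def cellsEquiv (hD : D.card = n) : Fin n ≃ D.cells where
  toFun i := ⟨(blk D i, i - psum D (blk D i)), by
    have := psum_blk_le_and_lt D (i := i) (by rw [hD]; exact i.2)
    rw [psum_succ] at this
    exact YoungDiagram.mem_iff_lt_rowLen.2 (by omega)⟩
  invFun c := ⟨psum D (c : ℕ × ℕ).1 + (c : ℕ × ℕ).2, by
    have h₁ : (c : ℕ × ℕ).2 < D.rowLen (c : ℕ × ℕ).1 := YoungDiagram.mem_iff_lt_rowLen.1 c.2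
    have h₂ := psum_le_card D ((c : ℕ × ℕ).1 + 1)
    rw [psum_succ] at h₂
    omega⟩
  left_inv i := by
    have := psum_blk_le_and_lt D (i := i) (by rw [hD]; exact i.2)
    ext
    simp only
    omega
  right_inv c := by
    have h₁ : (c : ℕ × ℕ).2 < D.rowLen (c : ℕ × ℕ).1 := YoungDiagram.mem_iff_lt_rowLen.1 c.2
    have hblk : blk D (psum D (c : ℕ × ℕ).1 + (c : ℕ × ℕ).2) = (c : ℕ × ℕ).1 :=
      blk_eq_of_psum_le_of_lt D (by omega) (by rw [psum_succ]; omega)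
    ext <;> simp [hblk]

lemma cellsEquiv_fst (hD : D.card = n) (i : Fin n) : (cellsEquiv hD i : ℕ × ℕ).1 = blk D i :=
  rfl

lemma card_filter_blk_eq (hD : D.card = n) (b : ℕ) :
    #{i : Fin n | blk D i = b} = D.rowLen b := by
  rw [YoungDiagram.rowLen_eq_card, YoungDiagram.row]
  refine card_bij' (fun i _ => (cellsEquiv hD i : ℕ × ℕ))
    (fun c hc => (cellsEquiv hD).symm ⟨c, (mem_filter.1 hc).1⟩) (fun i hi => ?_) (fun c hc => ?_)
    (fun i _ => by simp) (fun c _ => by simp)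
  · exact mem_filter.2 ⟨(cellsEquiv hD i).2, (mem_filter.1 hi).2⟩
  · rw [mem_filter, ← cellsEquiv_fst hD, Equiv.apply_symm_apply]
    exact ⟨mem_univ _, (mem_filter.1 hc).2⟩

end Blocks

section FerrersShape

open Finset

variable {E : YoungDiagram} {I : Finset (ℕ × ℕ)}

lemma card_filter_snd_lt_eq_sum_colLen (hcol : ∀ b, #{p ∈ I | p.2 = b} = E.colLen b) (m : ℕ) :
    #{p ∈ I | p.2 < m} = ∑ b ∈ range m, E.colLen b := by
  rw [card_eq_sum_card_fiberwise (f := Prod.snd) (t := range m) fun p hp =>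
    mem_range.2 (mem_filter.1 hp).2]
  refine sum_congr rfl fun b hb => ?_
  rw [filter_filter, ← hcol b]
  exact congrArg card (filter_congr fun p _ => ⟨And.right, fun h => ⟨h ▸ mem_range.1 hb, h⟩⟩)

lemma card_filter_snd_lt_eq_sum_rows {S : Finset (ℕ × ℕ)} {N : ℕ} (hS : ∀ p ∈ S, p.1 < N)
    (m : ℕ) : #{p ∈ S | p.2 < m} = ∑ a ∈ range N, #{p ∈ S | p.2 < m ∧ p.1 = a} := by
  rw [card_eq_sum_card_fiberwise (f := Prod.fst) (t := range N) fun p hp =>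
    mem_range.2 (hS p (mem_filter.1 hp).1)]
  simp only [filter_filter]

lemma card_filter_row_le (hrow : ∀ a, #{p ∈ I | p.1 = a} = E.rowLen a) (m a : ℕ) :
    #{p ∈ I | p.2 < m ∧ p.1 = a} ≤ min (E.rowLen a) m := by
  refine le_min ((card_le_card (monotone_filter_right _ fun _ _ h => h.2)).trans_eq (hrow a)) ?_
  refine (card_le_card_of_injOn Prod.snd (t := range m) (fun p hp => ?_)
    fun p hp q hq h => ?_).trans_eq (card_range m)
  · exact mem_range.2 (mem_filter.1 hp).2.1
  · exact Prod.ext ((mem_filter.1 hp).2.2.trans (mem_filter.1 hq).2.2.symm) h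

lemma card_cells_filter_row (E : YoungDiagram) (m a : ℕ) :
    #{c ∈ E.cells | c.2 < m ∧ c.1 = a} = min (E.rowLen a) m := by
  have : {c ∈ E.cells | c.2 < m ∧ c.1 = a} = {a} ×ˢ range (min (E.rowLen a) m) := by
    ext ⟨i, j⟩
    simp only [mem_filter, YoungDiagram.mem_cells, YoungDiagram.mem_iff_lt_rowLen, mem_product,
      mem_singleton, mem_range, lt_min_iff]
    constructor
    · rintro ⟨hj, hjm, rfl⟩; exact ⟨rfl, hj, hjm⟩
    · rintro ⟨rfl, hj, hjm⟩; exact ⟨hj, hjm, rfl⟩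
  rw [this, card_product, card_singleton, card_range, one_mul]

/-- Each row `a` of `I` meets the columns `< m` in at most `min (E.rowLen a) m` points, and the
column counts force equality for every `m`; taking `m = E.rowLen a` puts the whole row inside
`E`. -/
theorem subset_cells_of_card_filter_eq (hrow : ∀ a, #{p ∈ I | p.1 = a} = E.rowLen a)
    (hcol : ∀ b, #{p ∈ I | p.2 = b} = E.colLen b) : I ⊆ E.cells := by
  have hIN : ∀ p ∈ I, p.1 < E.colLen 0 := fun p hp => by
    have : 0 < E.rowLen p.1 := hrow p.1 ▸ card_pos.2 ⟨p, mem_filter.2 ⟨hp, rfl⟩⟩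
    exact fst_lt_colLen_zero (c := (p.1, 0)) (YoungDiagram.mem_iff_lt_rowLen.2 this)
  have hrows : ∀ m, ∀ a ∈ range (E.colLen 0),
      #{p ∈ I | p.2 < m ∧ p.1 = a} = min (E.rowLen a) m := fun m =>
    (sum_eq_sum_iff_of_le fun a _ => card_filter_row_le hrow m a).1 <| by
      rw [← card_filter_snd_lt_eq_sum_rows hIN, card_filter_snd_lt_eq_sum_colLen hcol,
        ← card_filter_snd_lt_eq_sum_colLen (I := E.cells) (fun b => E.colLen_eq_card.symm),
        card_filter_snd_lt_eq_sum_rows fun c hc => fst_lt_colLen_zero ((E.mem_cells c).1 hc)]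
      exact sum_congr rfl fun a _ => card_cells_filter_row E m a
  intro p hp
  have hfull : {q ∈ I | q.2 < E.rowLen p.1 ∧ q.1 = p.1} = {q ∈ I | q.1 = p.1} :=
    eq_of_subset_of_card_le (monotone_filter_right _ fun _ _ h => h.2)
      (by rw [hrows _ _ (mem_range.2 (hIN p hp)), min_self, hrow])
  have hp' : p ∈ {q ∈ I | q.2 < E.rowLen p.1 ∧ q.1 = p.1} := hfull ▸ mem_filter.2 ⟨hp, rfl⟩
  exact (E.mem_cells p).2 (YoungDiagram.mem_iff_lt_rowLen.2 (mem_filter.1 hp').2.1)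

end FerrersShape

section RowPair

open Finset

variable {n : ℕ} {D : YoungDiagram}

def rowPair (D : YoungDiagram) (g : Perm (Fin n)) (i : Fin n) : ℕ × ℕ :=
  (blk D.transpose i, blk D (g⁻¹ i))

lemma rowPair_comp_eq_iff {g g' σ : Perm (Fin n)} :
    rowPair D g' ∘ σ = rowPair D g ↔
      σ ∈ youngSubgroup n D.transpose ∧ σ • (g : Perm (Fin n) ⧸ youngSubgroup n D) = g' := by
  simp only [funext_iff, Function.comp_apply, rowPair, Prod.ext_iff, forall_and]
  refine and_congr Iff.rfl ?_
  rw [MulAction.Quotient.smul_mk, smul_eq_mul, eq_comm, QuotientGroup.eq, g.surjective.forall]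
  simp only [Perm.inv_def, Equiv.symm_apply_apply]
  rfl

lemma exists_swap_of_not_injective {g : Perm (Fin n)}
    (hg : ¬ Function.Injective (rowPair D g)) :
    ∃ τ ∈ youngSubgroup n D.transpose, Perm.sign τ = -1 ∧
      τ • (g : Perm (Fin n) ⧸ youngSubgroup n D) = g := by
  obtain ⟨i, j, hij, hne⟩ := Function.not_injective_iff.1 hg
  have hswap : rowPair D g ∘ swap i j = rowPair D g := by
    funext x
    simp only [Function.comp_apply, swap_apply_def]
    split_ifs with hi hj
    · rw [hi, hij]
    · rw [hj, hij]
    · rfl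
  obtain ⟨hH, hfix⟩ := rowPair_comp_eq_iff.1 hswap
  exact ⟨swap i j, hH, Perm.sign_swap hne, hfix⟩

lemma eq_one_of_rowPair_injective {g σ : Perm (Fin n)} (hg : Function.Injective (rowPair D g))
    (hσ : σ ∈ youngSubgroup n D.transpose)
    (hfix : σ • (g : Perm (Fin n) ⧸ youngSubgroup n D) = g) : σ = 1 :=
  Equiv.ext fun i => hg (congrFun (rowPair_comp_eq_iff.2 ⟨hσ, hfix⟩) i)

lemma range_rowPair (hD : D.card = n) {g : Perm (Fin n)}
    (hg : Function.Injective (rowPair D g)) :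
    Set.range (rowPair D g) = D.transpose.cells := by
  have hDt : D.transpose.card = n := (card_transpose D).trans hD
  have hsub : univ.image (rowPair D g) ⊆ D.transpose.cells := by
    refine subset_cells_of_card_filter_eq (fun a => ?_) fun b => ?_ <;>
      rw [filter_image, card_image_of_injective _ hg]
    · exact card_filter_blk_eq hDt a
    · rw [YoungDiagram.colLen_transpose, ← card_filter_blk_eq hD b]
      exact card_filter_comp_perm g⁻¹ (blk D · = b)
  rw [← Set.image_univ, ← coe_univ, ← coe_image, eq_of_subset_of_card_le hsub
    (by rw [card_image_of_injective _ hg, card_univ, Fintype.card_fin, ← hDt])]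

lemma exists_rowPair_injective (hD : D.card = n) :
    ∃ g : Perm (Fin n), Function.Injective (rowPair D g) := by
  let eT := cellsEquiv ((card_transpose D).trans hD)
  let g := (eT.trans ((transposeCellsEquiv D).trans (cellsEquiv hD).symm)).symm
  have hg : rowPair D g = fun i => (eT i : ℕ × ℕ) := by
    funext i
    refine Prod.ext rfl ?_
    simp [rowPair, g, Perm.inv_def, ← cellsEquiv_fst hD, transposeCellsEquiv]
  exact ⟨g, hg ▸ Subtype.val_injective.comp eT.injective⟩

lemma exists_smul_eq_of_rowPair_injective (hD : D.card = n) {g g' : Perm (Fin n)}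
    (hg : Function.Injective (rowPair D g)) (hg' : Function.Injective (rowPair D g')) :
    ∃ σ ∈ youngSubgroup n D.transpose,
      σ • (g : Perm (Fin n) ⧸ youngSubgroup n D) = g' := by
  let σ : Perm (Fin n) := (Equiv.ofInjective _ hg).trans
    ((Equiv.setCongr ((range_rowPair hD hg).trans (range_rowPair hD hg').symm)).trans
      (Equiv.ofInjective _ hg').symm)
  have hσ : rowPair D g' ∘ σ = rowPair D g := funext fun i => by
    simp [σ, Equiv.apply_ofInjective_symm]
  exact ⟨σ, rowPair_comp_eq_iff.1 hσ⟩

end RowPair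

/-- `⟨Ind_{S_{Dᵗ}}^{S_n}(sgn), Ind_{S_D}^{S_n}(1)⟩ = 1`. -/
theorem intertwining_transpose_eq_one (n : ℕ) (D : YoungDiagram) (hD : D.card = n) :
    interNum (sgnInduced n D.transpose) (youngModule n D) = 1 := by
  obtain ⟨g₀, hg₀⟩ := exists_rowPair_injective hD
  rw [interNum, sgnInduced, LinearEquiv.finrank_eq
    ((indRepHomEquiv _ _ _).trans (homEquivSemiInvariants _ _))]
  refine finrank_semiInvariants_ofMulAction_eq_one (g₀ : Perm (Fin n) ⧸ youngSubgroup n D)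
    (fun h hh => ?_) (fun x hx => ?_)
  · rw [show h = 1 from Subtype.ext (eq_one_of_rowPair_injective hg₀ h.2 hh), map_one]
  · obtain ⟨g, rfl⟩ := QuotientGroup.mk_surjective x
    have hg : ¬ Function.Injective (rowPair D g) := fun hg => by
      obtain ⟨σ, hσ, hσg⟩ := exists_smul_eq_of_rowPair_injective hD hg₀ hg
      exact hx ⟨⟨σ, hσ⟩, hσg⟩
    obtain ⟨τ, hτ, hsign, hfix⟩ := exists_swap_of_not_injective hg
    refine ⟨⟨τ, hτ⟩, hfix, ?_⟩
    rw [oneDimChar_sgnRep, hsign]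
    norm_num
end PieriGL
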